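/- arXiv:1210.6839 — 4 statements merged into one kernel-verified Lean document; each statement's English description precedes it below -/
import Mathlib

section
/- Let g be a probability density on [0,∞) with distribution function G, α > 0, ν > 1 with ν ∫₀^∞ e^{-αy} g(y) dy = 1, and let ν̄ = ν ∫₀^∞ s e^{-αs} g(s) ds denote the mean of the stable-age distribution. Let F_R be the distribution function with density f_R(x) = (∫₀^∞ e^{-αy} g(x+y) dy)/(∫₀^∞ e^{-αy}(1-G(y)) dy). Then ∫₀^∞ F_R(z) e^{-αz} dz = ν̄/(ν-1). -/
/-!
Write `k s = exp (-(α * s)) * g s` and `H x = ∫ s in Ioi x, k s` (`discountedTail α g`).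
Shifting the variable shows that the numerator of `f_R x` is `exp (α * x) * H x`. Exchanging
the order of integration over the triangle `0 < y < s` gives the denominator
`(1 - ∫ k) / α = (1 - 1 / ν) / α` and `∫₀^∞ H = ∫₀^∞ s k(s) ds = ν̄ / ν`. A third exchange gives,
for bounded `φ`, `∫₀^∞ (∫₀^z φ) e^{-αz} dz = (∫₀^∞ φ(u) e^{-αu} du) / α`; with
`φ u = exp (α * u) * H u` this turns `∫₀^∞ F_R(z) e^{-αz} dz` into `(ν̄ / ν) / (1 - 1 / ν)`.
-/

open MeasureTheory Set Real

lemma measurableSet_triangle : MeasurableSet {p : ℝ × ℝ | 0 < p.1 ∧ p.1 < p.2} :=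
  (measurableSet_lt measurable_const measurable_fst).inter
    (measurableSet_lt measurable_fst measurable_snd)

section Triangle

variable {E : Type*} [NormedAddCommGroup E]

lemma integrableOn_triangle_of_norm_le_mul {F : ℝ → ℝ → E} {a b : ℝ → ℝ}
    (hF : AEStronglyMeasurable (Function.uncurry F)) (ha : IntegrableOn a (Ioi 0))
    (hb : IntegrableOn b (Ioi 0)) (hle : ∀ y s, 0 < y → y < s → ‖F y s‖ ≤ a y * b s) :
    IntegrableOn (Function.uncurry F) {p : ℝ × ℝ | 0 < p.1 ∧ p.1 < p.2} := by
  have hab : IntegrableOn (fun p : ℝ × ℝ => a p.1 * b p.2) (Ioi 0 ×ˢ Ioi 0) := by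
    rw [IntegrableOn, Measure.volume_eq_prod, ← Measure.prod_restrict]
    exact ha.mul_prod hb
  refine (hab.mono_set fun p hp => ⟨hp.1, hp.1.trans hp.2⟩).mono' hF.restrict ?_
  exact (ae_restrict_iff' measurableSet_triangle).2 (.of_forall fun p hp => hle _ _ hp.1 hp.2)

variable [NormedSpace ℝ E]

lemma integral_Ioi_integral_Ioi_eq_integral_Ioi_integral_Ioo {F : ℝ → ℝ → E}
    (hF : IntegrableOn (Function.uncurry F) {p : ℝ × ℝ | 0 < p.1 ∧ p.1 < p.2}) :
    ∫ y in Ioi 0, ∫ s in Ioi y, F y s = ∫ s in Ioi 0, ∫ y in Ioo 0 s, F y s := by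
  set T := {p : ℝ × ℝ | 0 < p.1 ∧ p.1 < p.2}
  have hint : Integrable (T.indicator (Function.uncurry F)) (volume.prod volume) := by
    rw [← Measure.volume_eq_prod]; exact hF.integrable_indicator measurableSet_triangle
  have hrow : ∀ y, ∫ s, T.indicator (Function.uncurry F) (y, s) =
      (Ioi 0).indicator (fun y => ∫ s in Ioi y, F y s) y := by
    intro y
    by_cases hy : 0 < y
    · rw [indicator_of_mem (mem_Ioi.2 hy), ← integral_indicator measurableSet_Ioi]
      congr 1 with s
      simp [T, indicator, hy]
    · rw [indicator_of_notMem (notMem_Ioi.2 (not_lt.1 hy))]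
      simp [T, indicator, hy]
  have hcol : ∀ s, ∫ y, T.indicator (Function.uncurry F) (y, s) =
      (Ioi 0).indicator (fun s => ∫ y in Ioo 0 s, F y s) s := by
    intro s
    by_cases hs : 0 < s
    · rw [indicator_of_mem (mem_Ioi.2 hs), ← integral_indicator measurableSet_Ioo]
      rfl
    · rw [indicator_of_notMem (notMem_Ioi.2 (not_lt.1 hs))]
      have : ∀ y, (y, s) ∉ T := fun y hy => hs (hy.1.trans hy.2)
      simp [indicator_of_notMem (this _)]
  rw [← integral_indicator measurableSet_Ioi, ← integral_indicator measurableSet_Ioi]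
  simp_rw [← hrow, ← hcol]
  rw [← integral_prod _ hint, integral_prod_symm _ hint]

end Triangle

lemma integrableOn_exp_neg_mul_Ioi {c : ℝ} (hc : 0 < c) (a : ℝ) :
    IntegrableOn (fun s => exp (-(c * s))) (Ioi a) := by
  simpa only [neg_mul] using exp_neg_integrableOn_Ioi a hc

lemma integral_exp_neg_mul_Ioi {c : ℝ} (hc : 0 < c) (a : ℝ) :
    ∫ s in Ioi a, exp (-(c * s)) = exp (-(c * a)) / c := by
  simpa only [neg_mul, neg_div_neg_eq] using integral_exp_mul_Ioi (neg_neg_of_pos hc) a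

lemma integrableOn_exp_neg_mul_mul {c : ℝ} (hc : 0 ≤ c) {g : ℝ → ℝ}
    (hg : IntegrableOn g (Ioi 0)) : IntegrableOn (fun s => exp (-(c * s)) * g s) (Ioi 0) := by
  refine hg.bdd_mul (c := 1) (by fun_prop)
    ((ae_restrict_iff' measurableSet_Ioi).2 (.of_forall fun s hs => ?_))
  rw [norm_of_nonneg (exp_pos _).le, exp_le_one_iff, neg_nonpos]
  exact mul_nonneg hc (le_of_lt hs)

lemma measurable_integral_Ioi {f : ℝ → ℝ} (hf : Measurable f) :
    Measurable fun x => ∫ s in Ioi x, f s := by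
  simp_rw [← integral_indicator measurableSet_Ioi]
  exact (StronglyMeasurable.integral_prod_right (f := fun x s => (Ioi x).indicator f s)
    ((hf.comp measurable_snd).indicator
      (measurableSet_lt measurable_fst measurable_snd)).stronglyMeasurable).measurable

section Laplace

variable {α : ℝ}

lemma integral_exp_neg_mul_mul_integral_Ioi (hα : 0 < α) {g : ℝ → ℝ} (hgm : Measurable g)
    (hg : IntegrableOn g (Ioi 0)) :
    ∫ y in Ioi 0, exp (-(α * y)) * ∫ s in Ioi y, g s =
      ((∫ s in Ioi 0, g s) - ∫ s in Ioi 0, exp (-(α * s)) * g s) / α := by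
  have hinner : ∀ s ∈ Ioi (0 : ℝ),
      ∫ y in Ioo 0 s, exp (-(α * y)) * g s = (g s - exp (-(α * s)) * g s) / α := by
    intro s hs
    rw [integral_mul_const, ← integral_Ioc_eq_integral_Ioo,
      ← intervalIntegral.integral_of_le (le_of_lt hs),
      ← intervalIntegral.integral_Ioi_sub_Ioi (integrableOn_exp_neg_mul_Ioi hα 0) (le_of_lt hs),
      integral_exp_neg_mul_Ioi hα, integral_exp_neg_mul_Ioi hα]
    simp only [mul_zero, neg_zero, exp_zero]
    ring
  calc ∫ y in Ioi 0, exp (-(α * y)) * ∫ s in Ioi y, g s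
      = ∫ y in Ioi 0, ∫ s in Ioi y, exp (-(α * y)) * g s := by
        simp_rw [integral_const_mul]
    _ = ∫ s in Ioi 0, ∫ y in Ioo 0 s, exp (-(α * y)) * g s := by
        refine integral_Ioi_integral_Ioi_eq_integral_Ioi_integral_Ioo
          (integrableOn_triangle_of_norm_le_mul (by fun_prop)
            (integrableOn_exp_neg_mul_Ioi hα 0) hg.abs fun y s _ _ => ?_)
        rw [norm_mul, norm_of_nonneg (exp_pos _).le, norm_eq_abs]
    _ = ∫ s in Ioi 0, (g s - exp (-(α * s)) * g s) / α :=
        setIntegral_congr_fun measurableSet_Ioi hinner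
    _ = ((∫ s in Ioi 0, g s) - ∫ s in Ioi 0, exp (-(α * s)) * g s) / α := by
        rw [integral_div, integral_sub hg (integrableOn_exp_neg_mul_mul hα.le hg)]

lemma integral_intervalIntegral_mul_exp_neg_mul (hα : 0 < α) {φ : ℝ → ℝ} (hφ : Measurable φ)
    {C : ℝ} (hC : ∀ u, 0 < u → |φ u| ≤ C) :
    ∫ z in Ioi 0, (∫ u in 0..z, φ u) * exp (-(α * z)) =
      (∫ u in Ioi 0, φ u * exp (-(α * u))) / α := by
  calc ∫ z in Ioi 0, (∫ u in 0..z, φ u) * exp (-(α * z))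
      = ∫ z in Ioi 0, ∫ u in Ioo 0 z, φ u * exp (-(α * z)) := by
        refine setIntegral_congr_fun measurableSet_Ioi fun z hz => ?_
        rw [intervalIntegral.integral_of_le (le_of_lt hz), integral_Ioc_eq_integral_Ioo,
          integral_mul_const]
    _ = ∫ u in Ioi 0, ∫ z in Ioi u, φ u * exp (-(α * z)) := by
        refine (integral_Ioi_integral_Ioi_eq_integral_Ioi_integral_Ioo
          (integrableOn_triangle_of_norm_le_mul (by fun_prop)
            ((integrableOn_exp_neg_mul_Ioi (half_pos hα) 0).const_mul C)
            (integrableOn_exp_neg_mul_Ioi (half_pos hα) 0) fun u z hu huz => ?_)).symm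
        rw [norm_mul, norm_eq_abs, norm_of_nonneg (exp_pos _).le, mul_assoc, ← exp_add]
        exact mul_le_mul (hC u hu) (exp_le_exp.2 (by nlinarith)) (exp_pos _).le
          ((abs_nonneg _).trans (hC u hu))
    _ = ∫ u in Ioi 0, φ u * exp (-(α * u)) / α := by
        congr 1 with u
        rw [integral_const_mul, integral_exp_neg_mul_Ioi hα, mul_div_assoc]
    _ = (∫ u in Ioi 0, φ u * exp (-(α * u))) / α := integral_div _ _

end Laplace

noncomputable def discountedTail (α : ℝ) (g : ℝ → ℝ) (x : ℝ) : ℝ :=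
  ∫ s in Ioi x, exp (-(α * s)) * g s

section DiscountedTail

variable {α : ℝ} {g : ℝ → ℝ}

lemma integral_exp_neg_mul_mul_comp_add (x : ℝ) :
    ∫ y in Ioi 0, exp (-(α * y)) * g (x + y) = exp (α * x) * discountedTail α g x := by
  have hshift : ∀ y, exp (-(α * y)) * g (x + y) =
      exp (α * x) * (exp (-(α * (x + y))) * g (x + y)) := by
    intro y
    rw [← mul_assoc, ← exp_add]
    ring_nf
  simp_rw [hshift]
  have htranslate := (measurePreserving_add_left volume x).setIntegral_preimage_emb
    (measurableEmbedding_addLeft x) (fun s => exp (-(α * s)) * g s) (Ioi x)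
  rw [preimage_const_add_Ioi, sub_self] at htranslate
  rw [integral_const_mul, htranslate, discountedTail]

lemma measurable_discountedTail (hg : Measurable g) : Measurable (discountedTail α g) :=
  measurable_integral_Ioi (by fun_prop)

lemma abs_discountedTail_le (hα : 0 ≤ α) (hg : IntegrableOn g (Ioi 0)) {u : ℝ} (hu : 0 ≤ u) :
    |discountedTail α g u| ≤ exp (-(α * u)) * ∫ s in Ioi 0, |g s| := by
  have hgu : IntegrableOn g (Ioi u) := hg.mono_set (Ioi_subset_Ioi hu)
  calc |discountedTail α g u| ≤ ∫ s in Ioi u, exp (-(α * u)) * |g s| := by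
        rw [discountedTail, ← norm_eq_abs]
        refine norm_integral_le_of_norm_le (hgu.abs.const_mul _)
          ((ae_restrict_iff' measurableSet_Ioi).2 (.of_forall fun s hs => ?_))
        rw [norm_mul, norm_of_nonneg (exp_pos _).le, norm_eq_abs]
        gcongr
        exact le_of_lt hs
    _ ≤ exp (-(α * u)) * ∫ s in Ioi 0, |g s| := by
        rw [integral_const_mul]
        exact mul_le_mul_of_nonneg_left (setIntegral_mono_set hg.abs
          (.of_forall fun s => abs_nonneg _) (Ioi_subset_Ioi hu).eventuallyLE) (exp_pos _).le

lemma integral_discountedTail (hα : 0 < α) (hgm : Measurable g) (hg : IntegrableOn g (Ioi 0)) :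
    ∫ x in Ioi 0, discountedTail α g x = ∫ s in Ioi 0, s * exp (-(α * s)) * g s := by
  refine (integral_Ioi_integral_Ioi_eq_integral_Ioi_integral_Ioo
    (F := fun _ s => exp (-(α * s)) * g s) ?_).trans
    (setIntegral_congr_fun measurableSet_Ioi fun s hs => ?_)
  · -- for `y < s`, `exp (-(α * s)) ≤ exp (-(α / 2 * y)) * exp (-(α / 2 * s))`
    refine integrableOn_triangle_of_norm_le_mul (by fun_prop)
      (integrableOn_exp_neg_mul_Ioi (half_pos hα) 0)
      (integrableOn_exp_neg_mul_mul (half_pos hα).le hg.abs) fun y s hy hys => ?_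
    rw [norm_mul, norm_of_nonneg (exp_pos _).le, norm_eq_abs, ← mul_assoc, ← exp_add]
    gcongr
    nlinarith
  · rw [setIntegral_const, volume_real_Ioo_of_le (le_of_lt hs), smul_eq_mul]
    ring

lemma integral_intervalIntegral_exp_mul_discountedTail (hα : 0 < α) (hgm : Measurable g)
    (hg : IntegrableOn g (Ioi 0)) :
    ∫ z in Ioi 0, (∫ u in 0..z, exp (α * u) * discountedTail α g u) * exp (-(α * z)) =
      (∫ s in Ioi 0, s * exp (-(α * s)) * g s) / α := by
  have hbdd : ∀ u, 0 < u → |exp (α * u) * discountedTail α g u| ≤ ∫ s in Ioi 0, |g s| := by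
    intro u hu
    rw [abs_mul, abs_of_pos (exp_pos _)]
    calc exp (α * u) * |discountedTail α g u|
        ≤ exp (α * u) * (exp (-(α * u)) * ∫ s in Ioi 0, |g s|) :=
          mul_le_mul_of_nonneg_left (abs_discountedTail_le hα.le hg (le_of_lt hu)) (exp_pos _).le
      _ = ∫ s in Ioi 0, |g s| := by
          rw [← mul_assoc, ← exp_add, add_neg_cancel, exp_zero, one_mul]
  have hcancel : ∀ u, exp (α * u) * discountedTail α g u * exp (-(α * u)) =
      discountedTail α g u := fun u => by
    rw [mul_comm, ← mul_assoc, ← exp_add, neg_add_cancel, exp_zero, one_mul]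
  rw [integral_intervalIntegral_mul_exp_neg_mul (φ := fun u => exp (α * u) * discountedTail α g u)
    hα ((measurable_id.const_mul α).exp.mul (measurable_discountedTail hgm)) hbdd]
  simp_rw [hcancel]
  rw [integral_discountedTail hα hgm hg]

end DiscountedTail

lemma integral_exp_neg_mul_mul_one_sub_cdf {α : ℝ} (hα : 0 < α) {g G : ℝ → ℝ}
    (hgm : Measurable g) (hg_prob : ∫ y in Ioi 0, g y = 1)
    (hG : ∀ x, G x = ∫ y in Ioc 0 x, g y) :
    ∫ y in Ioi 0, exp (-(α * y)) * (1 - G y) =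
      (1 - ∫ s in Ioi 0, exp (-(α * s)) * g s) / α := by
  have hg : IntegrableOn g (Ioi 0) := .of_integral_ne_zero (by rw [hg_prob]; exact one_ne_zero)
  have hsurvival : ∀ y ∈ Ioi (0 : ℝ), exp (-(α * y)) * (1 - G y) =
      exp (-(α * y)) * ∫ s in Ioi y, g s := by
    intro y hy
    rw [hG y, ← intervalIntegral.integral_of_le (le_of_lt hy),
      ← intervalIntegral.integral_Ioi_sub_Ioi hg (le_of_lt hy), hg_prob]
    ring
  rw [setIntegral_congr_fun measurableSet_Ioi hsurvival,
    integral_exp_neg_mul_mul_integral_Ioi hα hgm hg, hg_prob]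

theorem integral_FR_exp_general (g : ℝ → ℝ) (hg_meas : Measurable g)
    (hg_prob : ∫ y in Set.Ioi (0:ℝ), g y = 1)
    (G : ℝ → ℝ) (hG : ∀ x, G x = ∫ y in Set.Ioc (0:ℝ) x, g y)
    (α ν : ℝ) (hα : 0 < α)
    (hMal : ν * ∫ y in Set.Ioi (0:ℝ), Real.exp (-(α * y)) * g y = 1)
    (nubar : ℝ)
    (hnubar : nubar = ν * ∫ s in Set.Ioi (0:ℝ), s * Real.exp (-(α * s)) * g s)
    (fR : ℝ → ℝ)
    (hfR : ∀ x, fR x = (∫ y in Set.Ioi (0:ℝ), Real.exp (-(α * y)) * g (x + y)) /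
        (∫ y in Set.Ioi (0:ℝ), Real.exp (-(α * y)) * (1 - G y)))
    (FR : ℝ → ℝ) (hFR : ∀ x, FR x = ∫ u in (0:ℝ)..x, fR u) :
    ∫ z in Set.Ioi (0:ℝ), FR z * Real.exp (-(α * z)) = nubar / (ν - 1) := by
  have hg : IntegrableOn g (Ioi 0) := .of_integral_ne_zero (by rw [hg_prob]; exact one_ne_zero)
  have hν0 : ν ≠ 0 := left_ne_zero_of_mul_eq_one hMal
  have hk : ∫ s in Ioi 0, exp (-(α * s)) * g s = 1 / ν := (eq_div_iff hν0).2 (by linarith)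
  have hFR' : ∀ z, FR z =
      (∫ u in 0..z, exp (α * u) * discountedTail α g u) / ((1 - 1 / ν) / α) := by
    intro z
    rw [hFR, ← intervalIntegral.integral_div]
    congr 1 with u
    rw [hfR, integral_exp_neg_mul_mul_comp_add,
      integral_exp_neg_mul_mul_one_sub_cdf hα hg_meas hg_prob hG, hk]
  simp_rw [hFR', div_mul_eq_mul_div, integral_div]
  rw [integral_intervalIntegral_exp_mul_discountedTail hα hg_meas hg, hnubar]
  generalize ∫ s in Ioi 0, s * exp (-(α * s)) * g s = M
  field_simp

/-- With `g, G, α, ν` as before, `ν̄` the mean of the stable-age distribution and `F_R` the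
residual-lifetime distribution function, `∫₀^∞ F_R(z) e^{-αz} dz = ν̄/(ν-1)`. -/
theorem integral_FR_exp (g : ℝ → ℝ) (hg_meas : Measurable g)
    (hg_nonneg : ∀ y, 0 ≤ g y) (hg_supp : ∀ y < (0:ℝ), g y = 0)
    (hg_prob : ∫ y in Set.Ioi (0:ℝ), g y = 1)
    (G : ℝ → ℝ) (hG : ∀ x, G x = ∫ y in Set.Ioc (0:ℝ) x, g y)
    (α ν : ℝ) (hα : 0 < α) (hν : 1 < ν)
    (hMal : ν * ∫ y in Set.Ioi (0:ℝ), Real.exp (-(α * y)) * g y = 1)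
    (nubar : ℝ)
    (hnubar : nubar = ν * ∫ s in Set.Ioi (0:ℝ), s * Real.exp (-(α * s)) * g s)
    (fR : ℝ → ℝ)
    (hfR : ∀ x, fR x = (∫ y in Set.Ioi (0:ℝ), Real.exp (-(α * y)) * g (x + y)) /
        (∫ y in Set.Ioi (0:ℝ), Real.exp (-(α * y)) * (1 - G y)))
    (FR : ℝ → ℝ) (hFR : ∀ x, FR x = ∫ u in (0:ℝ)..x, fR u) :
    ∫ z in Set.Ioi (0:ℝ), FR z * Real.exp (-(α * z)) = nubar / (ν - 1) :=
  integral_FR_exp_general g hg_meas hg_prob G hG α ν hα hMal nubar hnubar fR hfR FR hFR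
end

section
/- Let X be a nonnegative integer-valued random variable with E[X log(X)_+] < ∞, let η ∈ (0,1), K ≥ 1, and set m_i = K η^{-i}. With ν = E[X] and ν^(i) = E[X·1{X ≤ m_i}], the infinite product satisfies 1 - ∏_{i=1}^∞ (ν^(i)/ν) ≤ (log(1/η))^{-1} E[X log(X/K)_+], provided ν > 1. -/
/-!
Every factor `ν^(i)/ν` lies in `[0, 1]`, so `1 - ∏ (ν^(i)/ν) ≤ ∑ (1 - ν^(i)/ν)`, and as `ν > 1`
each summand is at most `ν - ν^(i) = E[X 1{X > m_i}]`. Exchanging sum and expectation, `X` is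
counted once for every level `m_i = K η^{-i}` below it, and there are at most
`log(X/K)_+ / log(1/η)` such levels.
-/

open MeasureTheory Finset Real

namespace Real

lemma le_one_add_mul_max_log {x : ℝ} (hx : 0 ≤ x) : x ≤ 1 + x * max (log x) 0 := by
  rcases hx.eq_or_lt with rfl | hx
  · simp
  calc x = 1 + x * (1 - x⁻¹) := by field_simp; ring
    _ ≤ 1 + x * max (log x) 0 := by
      gcongr
      exact (one_sub_inv_le_log_of_pos hx).trans (le_max_left _ _)

lemma mul_max_log_div_le {x K : ℝ} (hx : 0 ≤ x) (hK : 1 ≤ K) :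
    x * max (log (x / K)) 0 ≤ x * max (log x) 0 := by
  rcases hx.eq_or_lt with rfl | hx
  · simp
  gcongr
  exact div_le_self hx.le hK

end Real

theorem Finset.one_sub_sum_one_sub_le_prod {ι R : Type*} [CommRing R] [LinearOrder R]
    [IsStrictOrderedRing R] {a : ι → R} (s : Finset ι) (h0 : ∀ i ∈ s, 0 ≤ a i)
    (h1 : ∀ i ∈ s, a i ≤ 1) : 1 - ∑ i ∈ s, (1 - a i) ≤ ∏ i ∈ s, a i := by
  classical
  induction s using Finset.induction_on with
  | empty => simp
  | insert j s hj ih =>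
    simp only [mem_insert, forall_eq_or_imp] at h0 h1
    rw [sum_insert hj, prod_insert hj]
    have hP0 : 0 ≤ ∏ i ∈ s, a i := prod_nonneg h0.2
    have hP1 : ∏ i ∈ s, a i ≤ 1 := prod_le_one h0.2 h1.2
    nlinarith [ih h0.2 h1.2, h0.1, h1.1]

theorem one_sub_tprod_le_of_sum_one_sub_le {ι : Type*} {a : ι → ℝ} {c : ℝ} (h0 : ∀ i, 0 ≤ a i)
    (h1 : ∀ i, a i ≤ 1) (h : ∀ s : Finset ι, ∑ i ∈ s, (1 - a i) ≤ c) : 1 - ∏' i, a i ≤ c := by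
  have hprod : HasProd a (⨅ s : Finset ι, ∏ i ∈ s, a i) :=
    tendsto_atTop_ciInf (prod_anti_set_of_le_one h0 h1)
      ⟨0, by rintro _ ⟨s, rfl⟩; exact prod_nonneg fun i _ => h0 i⟩
  have hle : 1 - c ≤ ∏' i, a i := hprod.tprod_eq ▸ le_hasProd_of_le_prod hprod fun s =>
    (sub_le_sub_left (h s) 1).trans <|
      s.one_sub_sum_one_sub_le_prod (fun i _ => h0 i) fun i _ => h1 i
  linarith

section Levels

variable {η K : ℝ}

lemma succ_mul_log_lt_of_div_pow_lt (hη0 : 0 < η) (hK : 0 < K) {x : ℝ} {i : ℕ}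
    (hi : K / η ^ (i + 1) < x) : (i + 1 : ℝ) * log (1 / η) < log (x / K) := by
  have hx : 0 < x := (div_pos hK (pow_pos hη0 _)).trans hi
  have hlog := log_lt_log (by positivity) hi
  rw [log_div hK.ne' (by positivity), log_pow] at hlog
  rw [log_div hx.ne' hK.ne', one_div, log_inv]
  push_cast at hlog
  linarith

lemma card_filter_div_pow_lt_le (hη0 : 0 < η) (hη1 : η < 1) (hK : 0 < K) (x : ℝ)
    (s : Finset ℕ) :
    (#{i ∈ s | K / η ^ (i + 1) < x} : ℝ) ≤ max (log (x / K)) 0 / log (1 / η) := by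
  have hL : 0 < log (1 / η) := log_pos (by rw [lt_div_iff₀ hη0]; linarith)
  set t := max (log (x / K)) 0 / log (1 / η)
  have hsub : {i ∈ s | K / η ^ (i + 1) < x} ⊆ range ⌊t⌋₊ := by
    intro i hi
    have hlt : (i + 1 : ℝ) < t := by
      rw [lt_div_iff₀ hL]
      exact (succ_mul_log_lt_of_div_pow_lt hη0 hK (mem_filter.1 hi).2).trans_le
        (le_max_left _ _)
    exact mem_range.2 (Nat.le_floor (by exact_mod_cast hlt.le))
  calc (#{i ∈ s | K / η ^ (i + 1) < x} : ℝ) ≤ #(range ⌊t⌋₊) := by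
        exact_mod_cast card_le_card hsub
    _ = ⌊t⌋₊ := by rw [card_range]
    _ ≤ t := Nat.floor_le (div_nonneg (le_max_right _ _) hL.le)

lemma sum_ite_div_pow_lt_le (hη0 : 0 < η) (hη1 : η < 1) (hK : 0 < K) {x : ℝ} (hx : 0 ≤ x)
    (s : Finset ℕ) :
    ∑ i ∈ s, (if K / η ^ (i + 1) < x then x else 0) ≤
      (log (1 / η))⁻¹ * (x * max (log (x / K)) 0) := by
  rw [← sum_filter, sum_const, nsmul_eq_mul]
  calc (#{i ∈ s | K / η ^ (i + 1) < x} : ℝ) * x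
      ≤ max (log (x / K)) 0 / log (1 / η) * x := by
        gcongr
        exact card_filter_div_pow_lt_le hη0 hη1 hK x s
    _ = _ := by ring

end Levels

section Truncation

variable {Ω : Type*} [MeasurableSpace Ω] {μ : Measure Ω} {Y : Ω → ℝ}

lemma integrable_of_integrable_mul_max_log [IsFiniteMeasure μ] (hYm : AEStronglyMeasurable Y μ)
    (hY0 : ∀ ω, 0 ≤ Y ω) (h : Integrable (fun ω => Y ω * max (log (Y ω)) 0) μ) :
    Integrable Y μ :=
  ((integrable_const 1).add h).mono' hYm <| ae_of_all _ fun ω => by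
    simpa [abs_of_nonneg (hY0 ω)] using le_one_add_mul_max_log (hY0 ω)

lemma integrable_mul_max_log_div {K : ℝ} (hK : 1 ≤ K) (hYm : Measurable Y)
    (hY0 : ∀ ω, 0 ≤ Y ω) (h : Integrable (fun ω => Y ω * max (log (Y ω)) 0) μ) :
    Integrable (fun ω => Y ω * max (log (Y ω / K)) 0) μ :=
  h.mono' (by fun_prop) <| ae_of_all _ fun ω => by
    rw [norm_of_nonneg (mul_nonneg (hY0 ω) (le_max_right _ _))]
    exact mul_max_log_div_le (hY0 ω) hK

lemma integrable_ite_le (hYm : Measurable Y) (hY : Integrable Y μ) (c : ℝ) :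
    Integrable (fun ω => if Y ω ≤ c then Y ω else 0) μ := by
  have hs : MeasurableSet {ω | Y ω ≤ c} := measurableSet_le hYm measurable_const
  refine (hY.indicator hs).congr (ae_of_all _ fun ω => ?_)
  simp [Set.indicator_apply]

lemma integrable_ite_lt (hYm : Measurable Y) (hY : Integrable Y μ) (c : ℝ) :
    Integrable (fun ω => if c < Y ω then Y ω else 0) μ := by
  have hs : MeasurableSet {ω | c < Y ω} := measurableSet_lt measurable_const hYm
  refine (hY.indicator hs).congr (ae_of_all _ fun ω => ?_)
  simp [Set.indicator_apply]

lemma integral_sub_integral_ite_le (hYm : Measurable Y) (hY : Integrable Y μ) (c : ℝ) :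
    ∫ ω, Y ω ∂μ - ∫ ω, (if Y ω ≤ c then Y ω else 0) ∂μ =
      ∫ ω, (if c < Y ω then Y ω else 0) ∂μ := by
  rw [← integral_sub hY (integrable_ite_le hYm hY c)]
  congr with ω
  split_ifs <;> linarith

lemma sum_integral_ite_div_pow_lt_le {η K : ℝ} (hη0 : 0 < η) (hη1 : η < 1) (hK : 0 < K)
    (hYm : Measurable Y) (hY : Integrable Y μ) (hY0 : ∀ ω, 0 ≤ Y ω)
    (hYlog : Integrable (fun ω => Y ω * max (log (Y ω / K)) 0) μ) (s : Finset ℕ) :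
    ∑ i ∈ s, ∫ ω, (if K / η ^ (i + 1) < Y ω then Y ω else 0) ∂μ ≤
      (log (1 / η))⁻¹ * ∫ ω, Y ω * max (log (Y ω / K)) 0 ∂μ := by
  rw [← integral_finsetSum s fun i _ => integrable_ite_lt hYm hY _, ← integral_const_mul]
  exact integral_mono (integrable_finsetSum s fun i _ => integrable_ite_lt hYm hY _)
    (hYlog.const_mul _) fun ω => sum_ite_div_pow_lt_le hη0 hη1 hK (hY0 ω) s

end Truncation

/-- Effect of truncation on the expectation of a CTBP (Lemma: truncation levels
`m_i = K η^{-i}`): if `E[X log(X)_+] < ∞` and `ν = E[X] > 1`, then with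
`ν^{(i)} = E[X 1{X ≤ m_i}]`,
`1 - ∏_{i≥1} (ν^{(i)}/ν) ≤ (log(1/η))⁻¹ E[X log(X/K)_+]`. -/
theorem truncation_expectation_bound {Ω : Type*} [MeasurableSpace Ω] (ℙ : Measure Ω)
    [IsProbabilityMeasure ℙ] (X : Ω → ℕ) (hX : Measurable X)
    (η K : ℝ) (hη : η ∈ Set.Ioo (0:ℝ) 1) (hK : 1 ≤ K)
    (hXlogX : Integrable (fun ω => (X ω : ℝ) * max (Real.log (X ω : ℝ)) 0) ℙ)
    (ν : ℝ) (hν : ν = ∫ ω, (X ω : ℝ) ∂ℙ) (hν1 : 1 < ν)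
    (νi : ℕ → ℝ)
    (hνi : ∀ i : ℕ,
      νi i = ∫ ω, (if (X ω : ℝ) ≤ K / η ^ (i + 1) then (X ω : ℝ) else 0) ∂ℙ) :
    1 - (∏' i : ℕ, νi i / ν) ≤
      (Real.log (1 / η))⁻¹ * ∫ ω, (X ω : ℝ) * max (Real.log ((X ω : ℝ) / K)) 0 ∂ℙ := by
  obtain ⟨hη0, hη1⟩ := hη
  have hXm : Measurable fun ω => (X ω : ℝ) := by fun_prop
  have hX0 : ∀ ω, (0 : ℝ) ≤ X ω := fun ω => Nat.cast_nonneg _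
  have hXint := integrable_of_integrable_mul_max_log hXm.aestronglyMeasurable hX0 hXlogX
  have htail : ∀ i : ℕ, ν - νi i =
      ∫ ω, (if K / η ^ (i + 1) < (X ω : ℝ) then (X ω : ℝ) else 0) ∂ℙ := fun i => by
    rw [hν, hνi i, integral_sub_integral_ite_le hXm hXint]
  have hνi_le : ∀ i, νi i ≤ ν := fun i => sub_nonneg.1 <| (htail i).symm ▸
    integral_nonneg fun ω => by dsimp only; split_ifs <;> simp
  have hνi0 : ∀ i, 0 ≤ νi i := fun i => (hνi i).symm ▸
    integral_nonneg fun ω => by dsimp only; split_ifs <;> simp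
  have hν0 : 0 < ν := by linarith
  refine one_sub_tprod_le_of_sum_one_sub_le (fun i => div_nonneg (hνi0 i) hν0.le)
    (fun i => div_le_one_of_le₀ (hνi_le i) hν0.le) fun s => ?_
  calc ∑ i ∈ s, (1 - νi i / ν) ≤ ∑ i ∈ s, (ν - νi i) := sum_le_sum fun i _ => by
        rw [one_sub_div hν0.ne']
        exact div_le_self (sub_nonneg.2 (hνi_le i)) hν1.le
    _ = ∑ i ∈ s, ∫ ω, (if K / η ^ (i + 1) < (X ω : ℝ) then (X ω : ℝ) else 0) ∂ℙ :=
        sum_congr rfl fun i _ => htail i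
    _ ≤ _ := sum_integral_ite_div_pow_lt_le hη0 hη1 (by linarith) hXm hXint hX0
        (integrable_mul_max_log_div hK hXm hX0 hXlogX) s
end

section
/- Combining the previous two bounds: for X a nonnegative integer-valued random variable with ν = E[X] < ∞, η ∈ (0,1), K ≥ 1, m_j = Kη^{-j}, setting a_j = η E[(X ∧ m_j)²]/ν and b_j = η E[X ∧ m_j]/ν and assuming ν ≥ 1, the sum Σ_{j=1}^∞ b_1⋯b_{j-1} a_j ≤ 2νK/(1-η). -/
open MeasureTheory Finset Filter

/-!
Since `ν ≥ 1` and `E[X ∧ m] ≤ ν`, every `b_i` is at most `η` and `a_j ≤ η E[(X ∧ m_j)²]`, so the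
`j`-th term is at most `E[t_j (X ∧ K/t_j)²]` with `t_j = η^{j+1}`. Pointwise, `t (x ∧ K/t)²` is at
most `t x²` and at most `K²/t`. Splitting the indices at the first `k` with `t_k x ≤ K`, the terms
beyond `k` are bounded by `K x η^{j-k}` and those before `k` by `K x η^{k-1-j}`, so the whole sum is
at most `2 K x / (1 - η)`; integrating gives `2 K ν / (1 - η)`.
-/

section Pointwise

variable {η r K x : ℝ}

lemma exists_mul_pow_mul_le (hη0 : 0 ≤ η) (hη1 : η < 1) (hK : 0 < K) :
    ∃ k : ℕ, r * η ^ k * x ≤ K := by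
  have h : Tendsto (fun k : ℕ => r * η ^ k * x) atTop (nhds 0) := by
    simpa using ((tendsto_pow_atTop_nhds_zero_of_lt_one hη0 hη1).const_mul r).mul_const x
  exact (h.eventually (eventually_le_nhds hK)).exists

lemma mul_pow_mul_min_sq_le_of_le (hη0 : 0 < η) (hr : 0 < r) (hK : 0 ≤ K) (hx : 0 ≤ x)
    {j n : ℕ} (hjn : j ≤ n) (hn : K ≤ r * η ^ n * x) :
    r * η ^ j * min x (K / (r * η ^ j)) ^ 2 ≤ K * x * η ^ (n - j) := by
  obtain ⟨d, rfl⟩ := Nat.exists_eq_add_of_le hjn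
  have ht : 0 < r * η ^ j := by positivity
  have hK' : K ≤ r * η ^ j * (x * η ^ d) := hn.trans_eq (by ring)
  rw [Nat.add_sub_cancel_left]
  calc r * η ^ j * min x (K / (r * η ^ j)) ^ 2
      ≤ r * η ^ j * (K / (r * η ^ j)) ^ 2 := by
        gcongr
        exact min_le_right _ _
    _ = K * (K / (r * η ^ j)) := by field_simp
    _ ≤ K * (x * η ^ d) := by gcongr; rwa [div_le_iff₀' ht]
    _ = K * x * η ^ d := by ring

lemma mul_pow_add_mul_min_sq_le (hη0 : 0 ≤ η) (hr : 0 ≤ r) (hx : 0 ≤ x) {k : ℕ}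
    (hk : r * η ^ k * x ≤ K) (i : ℕ) :
    r * η ^ (k + i) * min x (K / (r * η ^ (k + i))) ^ 2 ≤ K * x * η ^ i := by
  have hK : 0 ≤ K := le_trans (by positivity) hk
  calc r * η ^ (k + i) * min x (K / (r * η ^ (k + i))) ^ 2
      ≤ r * η ^ (k + i) * x ^ 2 := by
        gcongr
        exact min_le_left _ _
    _ = (r * η ^ k * x) * x * η ^ i := by ring
    _ ≤ K * x * η ^ i := by gcongr

lemma sum_mul_pow_mul_min_sq_le (hη0 : 0 < η) (hη1 : η < 1) (hr : 0 < r) (hK : 0 < K)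
    (hx : 0 ≤ x) (N : ℕ) :
    ∑ j ∈ range N, r * η ^ j * min x (K / (r * η ^ j)) ^ 2 ≤ 2 * K * x / (1 - η) := by
  classical
  set t : ℕ → ℝ := fun j => r * η ^ j * min x (K / (r * η ^ j)) ^ 2
  have hex := exists_mul_pow_mul_le (r := r) (x := x) hη0.le hη1 hK
  set k := Nat.find hex
  have hgeom : ∀ n, K * x * ∑ j ∈ range n, η ^ j ≤ K * x / (1 - η) := fun n => by
    have h := geom_sum_Ico_le_of_lt_one (m := 0) (n := n) hη0.le hη1
    rw [← range_eq_Ico, pow_zero] at h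
    exact (mul_le_mul_of_nonneg_left h (by positivity)).trans_eq (mul_one_div _ _)
  have head : ∑ j ∈ range k, t j ≤ K * x / (1 - η) := by
    calc ∑ j ∈ range k, t j ≤ ∑ j ∈ range k, K * x * η ^ (k - 1 - j) := by
          refine sum_le_sum fun j hj => ?_
          have hlt : k - 1 < k := by grind
          exact mul_pow_mul_min_sq_le_of_le hη0 hr hK.le hx (by grind)
            (not_le.mp (Nat.find_min hex hlt)).le
      _ = K * x * ∑ j ∈ range k, η ^ j := by
          rw [← mul_sum, sum_range_reflect (fun j => η ^ j)]
      _ ≤ K * x / (1 - η) := hgeom k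
  have tail : ∑ i ∈ range N, t (k + i) ≤ K * x / (1 - η) := by
    calc ∑ i ∈ range N, t (k + i) ≤ ∑ i ∈ range N, K * x * η ^ i :=
          sum_le_sum fun i _ => mul_pow_add_mul_min_sq_le hη0.le hr.le hx (Nat.find_spec hex) i
      _ = K * x * ∑ i ∈ range N, η ^ i := by rw [mul_sum]
      _ ≤ K * x / (1 - η) := hgeom N
  have ht : ∀ j, 0 ≤ t j := fun j => by positivity
  calc ∑ j ∈ range N, t j ≤ ∑ j ∈ range (k + N), t j :=
        sum_le_sum_of_subset_of_nonneg (range_mono (Nat.le_add_left N k)) fun j _ _ => ht j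
    _ = ∑ j ∈ range k, t j + ∑ i ∈ range N, t (k + i) := sum_range_add t k N
    _ ≤ K * x / (1 - η) + K * x / (1 - η) := add_le_add head tail
    _ = 2 * K * x / (1 - η) := by ring

end Pointwise

section Integral

variable {Ω : Type*} [MeasurableSpace Ω] {μ : Measure Ω} [IsFiniteMeasure μ] {f : Ω → ℝ}

lemma integrable_min_const_sq (hf : AEStronglyMeasurable f μ) (hf0 : 0 ≤ f) {c : ℝ}
    (hc : 0 ≤ c) : Integrable (fun ω => min (f ω) c ^ 2) μ := by
  refine Integrable.of_bound ((hf.inf aestronglyMeasurable_const).pow 2) (c ^ 2) ?_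
  filter_upwards with ω
  rw [Real.norm_eq_abs, abs_of_nonneg (by positivity)]
  exact pow_le_pow_left₀ (le_min (hf0 ω) hc) (min_le_right _ _) 2

lemma integral_min_const_le (hf : Integrable f μ) (c : ℝ) :
    ∫ ω, min (f ω) c ∂μ ≤ ∫ ω, f ω ∂μ :=
  integral_mono (hf.inf (integrable_const c)) hf fun _ => min_le_left _ _

lemma sum_integral_mul_pow_mul_min_sq_le {η r K : ℝ} (hf : Integrable f μ) (hf0 : 0 ≤ f)
    (hη0 : 0 < η) (hη1 : η < 1) (hr : 0 < r) (hK : 0 < K) (N : ℕ) :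
    ∑ j ∈ range N, ∫ ω, r * η ^ j * min (f ω) (K / (r * η ^ j)) ^ 2 ∂μ ≤
      2 * K * (∫ ω, f ω ∂μ) / (1 - η) := by
  have hint : ∀ j, Integrable (fun ω => r * η ^ j * min (f ω) (K / (r * η ^ j)) ^ 2) μ :=
    fun j => (integrable_min_const_sq hf.1 hf0 (by positivity)).const_mul _
  rw [← integral_finsetSum _ fun j _ => hint j, ← integral_const_mul, ← integral_div]
  exact integral_mono (integrable_finsetSum _ fun j _ => hint j)
    ((hf.const_mul _).div_const _) fun ω => sum_mul_pow_mul_min_sq_le hη0 hη1 hr hK (hf0 ω) N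

end Integral

theorem truncation_variance_bound_general {Ω : Type*} [MeasurableSpace Ω] (ℙ : Measure Ω)
    [IsProbabilityMeasure ℙ] (X : Ω → ℕ)
    (hInt : Integrable (fun ω => (X ω : ℝ)) ℙ)
    (η K : ℝ) (hη : η ∈ Set.Ioo (0:ℝ) 1) (hK : 1 ≤ K)
    (ν : ℝ) (hν : ν = ∫ ω, (X ω : ℝ) ∂ℙ) (hν1 : 1 ≤ ν)
    (a b : ℕ → ℝ)
    (ha : ∀ j : ℕ, a j = η * (∫ ω, (min (X ω : ℝ) (K / η ^ (j + 1))) ^ 2 ∂ℙ) / ν)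
    (hb : ∀ j : ℕ, b j = η * (∫ ω, min (X ω : ℝ) (K / η ^ (j + 1)) ∂ℙ) / ν) :
    ∑' j : ℕ, (∏ i ∈ Finset.range j, b i) * a j ≤ 2 * ν * K / (1 - η) := by
  obtain ⟨hη0, hη1⟩ := hη
  have hK0 : 0 < K := by linarith
  have hν0 : 0 < ν := by linarith
  have hX0 : 0 ≤ fun ω => (X ω : ℝ) := fun ω => Nat.cast_nonneg _
  have hb0 : ∀ j, 0 ≤ b j := fun j => by rw [hb j]; positivity
  have ha0 : ∀ j, 0 ≤ a j := fun j => by rw [ha j]; positivity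
  have hbη : ∀ j, b j ≤ η := fun j => by
    rw [hb j, div_le_iff₀ hν0, hν]
    exact mul_le_mul_of_nonneg_left (integral_min_const_le hInt _) hη0.le
  have hterm : ∀ j, (∏ i ∈ range j, b i) * a j ≤
      ∫ ω, η * η ^ j * min (X ω : ℝ) (K / (η * η ^ j)) ^ 2 ∂ℙ := fun j => by
    have hprod : ∏ i ∈ range j, b i ≤ η ^ j :=
      (prod_le_prod (fun i _ => hb0 i) fun i _ => hbη i).trans_eq (by rw [prod_const, card_range])
    have haη : a j ≤ η * ∫ ω, min (X ω : ℝ) (K / η ^ (j + 1)) ^ 2 ∂ℙ := by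
      rw [ha j]; exact div_le_self (by positivity) hν1
    calc (∏ i ∈ range j, b i) * a j
        ≤ η ^ j * (η * ∫ ω, min (X ω : ℝ) (K / η ^ (j + 1)) ^ 2 ∂ℙ) :=
          mul_le_mul hprod haη (ha0 j) (by positivity)
      _ = _ := by rw [integral_const_mul, pow_succ']; ring
  refine Real.tsum_le_of_sum_range_le (fun j => mul_nonneg (prod_nonneg fun i _ => hb0 i) (ha0 j))
    fun N => ?_
  calc ∑ j ∈ range N, (∏ i ∈ range j, b i) * a j
      ≤ ∑ j ∈ range N, ∫ ω, η * η ^ j * min (X ω : ℝ) (K / (η * η ^ j)) ^ 2 ∂ℙ :=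
        sum_le_sum fun j _ => hterm j
    _ ≤ 2 * K * ν / (1 - η) := by
        rw [hν]; exact sum_integral_mul_pow_mul_min_sq_le hInt hX0 hη0 hη1 hη0 hK0 N
    _ = 2 * ν * K / (1 - η) := by ring

/-- Effect of truncation on the variance of a CTBP: with `m_j = K η^{-j}`,
`a_j = η E[(X ∧ m_j)²]/ν`, `b_j = η E[X ∧ m_j]/ν` and `ν = E[X] ≥ 1`,
`∑_{j≥1} b_1 ⋯ b_{j-1} a_j ≤ 2νK/(1-η)`. -/
theorem truncation_variance_bound {Ω : Type*} [MeasurableSpace Ω] (ℙ : Measure Ω)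
    [IsProbabilityMeasure ℙ] (X : Ω → ℕ) (hX : Measurable X)
    (hInt : Integrable (fun ω => (X ω : ℝ)) ℙ)
    (η K : ℝ) (hη : η ∈ Set.Ioo (0:ℝ) 1) (hK : 1 ≤ K)
    (ν : ℝ) (hν : ν = ∫ ω, (X ω : ℝ) ∂ℙ) (hν1 : 1 ≤ ν)
    (a b : ℕ → ℝ)
    (ha : ∀ j : ℕ, a j = η * (∫ ω, (min (X ω : ℝ) (K / η ^ (j + 1))) ^ 2 ∂ℙ) / ν)
    (hb : ∀ j : ℕ, b j = η * (∫ ω, min (X ω : ℝ) (K / η ^ (j + 1)) ∂ℙ) / ν) :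
    ∑' j : ℕ, (∏ i ∈ Finset.range j, b i) * a j ≤ 2 * ν * K / (1 - η) :=
  truncation_variance_bound_general ℙ X hInt η K hη hK ν hν hν1 a b ha hb
end

section
/- Let (d_i)_{i∈[n]} be a degree sequence and D_n the degree of a uniformly chosen vertex. If the uniform X² log X condition holds—i.e., for every sequence K_n → ∞, limsup_n E[D_n² log(D_n/K_n)_+] = 0—then the maximal degree Δ_n = max_i d_i satisfies Δ_n = o(√(n/log n)). Concretely: if for some ε > 0 and infinitely many n one has Δ_n ≥ ε√(n/log n), then with K_n = n^{1/4}, E[D_n² log(D_n/K_n)_+] ≥ ε²/8 for all large such n. -/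
/-!
With `a = ε √(n / log n)` and `K = n^{1/4}` one has
`log (a / K) = log ε + (log n) / 4 - (log log n) / 2 ≥ (log n) / 8` for large `n`,
since `log log n` and the constant `log ε` are both `o(log n)`.
A single vertex of degree at least `a` therefore already contributes
`n⁻¹ a² log (a / K) ≥ n⁻¹ · ε² (n / log n) · (log n) / 8 = ε² / 8`
to `E[D_n² log(D_n/K)_+]`, as `x ↦ x² log⁺ (x / K)` is monotone on `[0, ∞)`.
-/

open Filter Real

lemma eventually_log_log_le_mul_log {c : ℝ} (hc : 0 < c) :
    ∀ᶠ x : ℝ in atTop, log (log x) ≤ c * log x := by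
  have hlittleO : (fun x => log (log x)) =o[atTop] log :=
    isLittleO_log_id_atTop.comp_tendsto tendsto_log_atTop
  filter_upwards [hlittleO.bound hc, tendsto_log_atTop.eventually_ge_atTop 0] with x hbound hlog
  rw [norm_eq_abs, norm_eq_abs, abs_of_nonneg hlog] at hbound
  exact (le_abs_self _).trans hbound

lemma log_mul_sqrt_div_log_div_rpow {ε x : ℝ} (hε : 0 < ε) (hx : 1 < x) :
    log (ε * √(x / log x) / x ^ (1 / 4 : ℝ)) = log ε + log x / 4 - log (log x) / 2 := by
  have hx₀ : 0 < x := zero_lt_one.trans hx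
  have hlog : 0 < log x := log_pos hx
  have hratio : 0 < x / log x := div_pos hx₀ hlog
  rw [log_div (by positivity) (by positivity), log_rpow hx₀,
    log_mul hε.ne' (sqrt_pos.2 hratio).ne', log_sqrt hratio.le, log_div hx₀.ne' hlog.ne']
  ring

lemma eventually_log_div_rpow_ge {ε : ℝ} (hε : 0 < ε) :
    ∀ᶠ x : ℝ in atTop, 1 < x ∧ log x / 8 ≤ log (ε * √(x / log x) / x ^ (1 / 4 : ℝ)) := by
  filter_upwards [eventually_gt_atTop 1, eventually_log_log_le_mul_log (c := 1 / 8) (by norm_num),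
    tendsto_log_atTop.eventually_ge_atTop (-16 * log ε)] with x hx hloglog hlog
  refine ⟨hx, ?_⟩
  rw [log_mul_sqrt_div_log_div_rpow hε hx]
  linarith

/-- Uniform `X² log X` control fails for large maximal degree: for every `ε > 0` there is `N`
such that for all `n ≥ N` and every degree sequence `d` on `[n]` with maximal degree at least
`ε √(n/log n)`, one has `E[D_n² log(D_n/n^{1/4})_+] ≥ ε²/8`. -/
theorem max_degree_little_o (ε : ℝ) (hε : 0 < ε) :
    ∃ N : ℕ, ∀ n : ℕ, N ≤ n → ∀ d : Fin n → ℕ,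
      (∃ i, ε * Real.sqrt ((n : ℝ) / Real.log n) ≤ (d i : ℝ)) →
      ε ^ 2 / 8 ≤ (1 / (n : ℝ)) *
        ∑ i, (d i : ℝ) ^ 2 * max (Real.log ((d i : ℝ) / (n : ℝ) ^ ((1:ℝ)/4))) 0 := by
  obtain ⟨N, hN⟩ := eventually_atTop.mp <|
    tendsto_natCast_atTop_atTop.eventually (eventually_log_div_rpow_ge hε)
  refine ⟨N, fun n hn d ⟨i, hi⟩ => ?_⟩
  obtain ⟨hn₁, hlog_ge⟩ := hN n hn
  have hlog : 0 < log n := log_pos hn₁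
  set K : ℝ := (n : ℝ) ^ (1 / 4 : ℝ)
  set a : ℝ := ε * √(n / log n) with ha
  have ha_sq : a ^ 2 = ε ^ 2 * (n / log n) := by rw [ha, mul_pow, sq_sqrt (by positivity)]
  simp only [max_comm _ (0 : ℝ), ← posLog_apply]
  calc ε ^ 2 / 8 = 1 / n * (a ^ 2 * (log n / 8)) := by
        rw [ha_sq]; field_simp
    _ ≤ 1 / n * (a ^ 2 * log⁺ (a / K)) := by
        gcongr; exact hlog_ge.trans (le_max_right _ _)
    _ ≤ 1 / n * (d i ^ 2 * log⁺ (d i / K)) := by gcongr; exact posLog_nonneg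
    _ ≤ 1 / n * ∑ j, (d j : ℝ) ^ 2 * log⁺ (d j / K) := by
        gcongr
        exact Finset.single_le_sum (f := fun j => (d j : ℝ) ^ 2 * log⁺ (d j / K))
          (fun j _ => mul_nonneg (sq_nonneg _) posLog_nonneg) (Finset.mem_univ i)
end
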